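/- Let (𝔄, G, Θ) be a C*-dynamical system with 𝔄 separable and G countable discrete amenable, and let (F_k) be a right Følner sequence for G. Then for every positive element a ∈ 𝔄, the sequence ‖(1/|F_k|) Σ_{g∈F_k} Θ_g a‖ converges to m(a | S^G) = sup{ψ(a) : ψ a Θ-invariant state}. In particular the limit is independent of the choice of right Følner sequence. -/

import Mathlib

open scoped ComplexOrder symmDiff

/-- A state on a unital C*-algebra, as an element of the weak-* dual. -/
def IsState {A : Type*} [NormedRing A] [StarRing A] [CStarRing A] [NormedAlgebra ℂ A]
    [CompleteSpace A] [StarModule ℂ A] (φ : WeakDual ℂ A) : Prop :=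
  φ 1 = 1 ∧ ∀ a : A, 0 ≤ φ (star a * a)

/-- An action by algebra automorphisms is a *-action if each automorphism preserves `star`,
i.e. each `Θ g` is a *-automorphism. -/
def IsStarAction {A G : Type*} [NormedRing A] [StarRing A] [NormedAlgebra ℂ A] [Group G]
    (Θ : G →* (A ≃ₐ[ℂ] A)) : Prop :=
  ∀ (g : G) (x : A), Θ g (star x) = star (Θ g x)

/-- The ergodic average `Avg_F x = (1/|F|) ∑_{g ∈ F} Θ_g x`. -/
noncomputable def avg {A G : Type*} [NormedRing A] [NormedAlgebra ℂ A] [Group G]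
    (Θ : G →* (A ≃ₐ[ℂ] A)) (F : Finset G) (x : A) : A :=
  ((F.card : ℂ))⁻¹ • ∑ g ∈ F, Θ g x

/-- A right Følner sequence: nonempty finite sets with `|F_k g Δ F_k| / |F_k| → 0`. -/
def RightFolner {G : Type*} [Group G] [DecidableEq G] (F : ℕ → Finset G) : Prop :=
  (∀ k, (F k).Nonempty) ∧ ∀ g : G, Filter.Tendsto
    (fun k => ((Finset.image (· * g) (F k) ∆ F k).card : ℝ) / (F k).card)
    Filter.atTop (nhds 0)

/-!
An invariant state `ψ` satisfies `ψ a = ψ (Avg_F a) ≤ ‖Avg_F a‖`, so the supremum is a lower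
bound for every term. Conversely, pick states `φ_k` with `φ_k (Avg_{F_k} a) = ‖Avg_{F_k} a‖`
(Hahn–Banach; a norming functional of `1 + b` is automatically a state). The averaged states
`φ_k ∘ Avg_{F_k}` are almost invariant by the Følner condition, so by weak-* compactness of the
state space they cluster at an invariant state `ψ`, and `ψ a` is at least any level that the norms
`‖Avg_{F_k} a‖` reach infinitely often.
-/

open Filter Topology Finset
open scoped CStarAlgebra

lemma Finset.norm_sum_sub_sum_le_card_symmDiff_mul {ι E : Type*} [SeminormedAddCommGroup E]
    [DecidableEq ι] (s t : Finset ι) {f : ι → E} {C : ℝ} (hf : ∀ i, ‖f i‖ ≤ C) :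
    ‖∑ i ∈ s, f i - ∑ i ∈ t, f i‖ ≤ #(s ∆ t) * C := by
  rw [← sum_sdiff_sub_sum_sdiff]
  calc ‖∑ i ∈ s \ t, f i - ∑ i ∈ t \ s, f i‖
      ≤ ∑ i ∈ s \ t, ‖f i‖ + ∑ i ∈ t \ s, ‖f i‖ :=
        (norm_sub_le _ _).trans (add_le_add (norm_sum_le _ _) (norm_sum_le _ _))
    _ = ∑ i ∈ s ∆ t, ‖f i‖ := by
        rw [symmDiff_def, sup_eq_union, sum_union disjoint_sdiff_sdiff]
    _ ≤ #(s ∆ t) * C := by simpa using sum_le_card_nsmul _ _ _ fun i _ => hf i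

lemma Complex.eq_of_norm_le_of_le_re {z : ℂ} {r : ℝ} (hnorm : ‖z‖ ≤ r) (hre : r ≤ z.re) :
    z = r := by
  have him : z.im = 0 :=
    abs_re_eq_norm.1 (le_antisymm (abs_re_le_norm z) (by linarith [le_abs_self z.re]))
  exact Complex.ext (le_antisymm (by simpa using (re_le_norm z).trans hnorm) (by simpa using hre))
    (by simpa using him)

section Averages

variable {A G : Type*} [NormedRing A] [NormedAlgebra ℂ A] [Group G] {Θ : G →* (A ≃ₐ[ℂ] A)}

lemma avg_one {F : Finset G} (hF : F.Nonempty) : avg Θ F (1 : A) = 1 := by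
  simp [avg, ← Nat.cast_smul_eq_nsmul ℂ, smul_smul, hF.card_ne_zero]

lemma apply_avg_eq_of_invariant {ψ : WeakDual ℂ A} (hψ : ∀ (g : G) (x : A), ψ (Θ g x) = ψ x)
    {F : Finset G} (hF : F.Nonempty) (x : A) : ψ (avg Θ F x) = ψ x := by
  simp [avg, hψ, hF.card_ne_zero]

end Averages

section CStarAlgebra

variable {A : Type*} [CStarAlgebra A]

lemma IsSelfAdjoint.norm_add_smul_I_sq_le [Nontrivial A] {y : A} (hy : IsSelfAdjoint y) (t : ℝ) :
    ‖y + ((t : ℂ) * Complex.I) • 1‖ ^ 2 ≤ ‖y‖ ^ 2 + t ^ 2 := by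
  have hmul : star (y + ((t : ℂ) * Complex.I) • 1) * (y + ((t : ℂ) * Complex.I) • 1) =
      star y * y + ((t : ℂ) ^ 2) • 1 := by
    simp only [star_add, star_smul, star_one, hy.star_eq, star_mul', Complex.star_def,
      Complex.conj_ofReal, Complex.conj_I, add_mul, mul_add, one_mul, mul_one,
      smul_mul_assoc, mul_smul_comm]
    rw [smul_add, smul_smul]
    have : (t : ℂ) * Complex.I * ((t : ℂ) * -Complex.I) = (t : ℂ) ^ 2 := by
      ring_nf; simp
    rw [this]
    module
  calc ‖y + ((t : ℂ) * Complex.I) • 1‖ ^ 2 = ‖star y * y + ((t : ℂ) ^ 2) • (1 : A)‖ := by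
        rw [← hmul, CStarRing.norm_star_mul_self, sq]
    _ ≤ ‖star y * y‖ + ‖((t : ℂ) ^ 2) • (1 : A)‖ := norm_add_le _ _
    _ = ‖y‖ ^ 2 + t ^ 2 := by simp [norm_smul, CStarRing.norm_star_mul_self, sq]

lemma StrongDual.im_apply_eq_zero_of_isSelfAdjoint {φ : StrongDual ℂ A} (h1 : φ 1 = 1)
    (hφ : ‖φ‖ ≤ 1) {y : A} (hy : IsSelfAdjoint y) : (φ y).im = 0 := by
  have : Nontrivial A := ⟨1, 0, fun h => by simp [h] at h1⟩
  -- `|φ y + t i|² ≤ ‖y‖² + t²` for all real `t` leaves no room for the term `2 t Im φ(y)`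
  have key (t : ℝ) : (φ y).re ^ 2 + ((φ y).im + t) ^ 2 ≤ ‖y‖ ^ 2 + t ^ 2 := by
    have happ : φ (y + ((t : ℂ) * Complex.I) • 1) = φ y + (t : ℂ) * Complex.I := by
      rw [map_add, map_smul, h1, smul_eq_mul, mul_one]
    have hle : ‖φ (y + ((t : ℂ) * Complex.I) • 1)‖ ≤ ‖y + ((t : ℂ) * Complex.I) • 1‖ :=
      (φ.le_opNorm _).trans (mul_le_of_le_one_left (norm_nonneg _) hφ)
    have hsq := pow_le_pow_left₀ (norm_nonneg _) hle 2
    rw [happ, Complex.sq_norm, Complex.normSq_apply] at hsq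
    simp only [Complex.add_re, Complex.mul_re, Complex.ofReal_re, Complex.I_re, Complex.ofReal_im,
      Complex.I_im, Complex.add_im, Complex.mul_im] at hsq
    nlinarith [hy.norm_add_smul_I_sq_le t]
  by_contra him
  have h := key ((‖y‖ ^ 2 + 1) / (2 * (φ y).im))
  have : 2 * (φ y).im * ((‖y‖ ^ 2 + 1) / (2 * (φ y).im)) = ‖y‖ ^ 2 + 1 := by field_simp
  nlinarith [sq_nonneg (φ y).re, sq_nonneg (φ y).im]

lemma IsState.nontrivial {φ : WeakDual ℂ A} (hφ : IsState φ) : Nontrivial A :=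
  ⟨1, 0, fun h => by simpa [h] using hφ.1⟩

section Action

variable {G : Type*} [Group G] {Θ : G →* (A ≃ₐ[ℂ] A)}

namespace IsStarAction

lemma isometry (hΘ : IsStarAction Θ) (g : G) : Isometry (Θ g) :=
  StarAlgEquiv.isometry (StarAlgEquiv.ofAlgEquiv (Θ g) (hΘ g))

lemma norm_apply (hΘ : IsStarAction Θ) (g : G) (x : A) : ‖Θ g x‖ = ‖x‖ :=
  StarAlgEquiv.norm_map (StarAlgEquiv.ofAlgEquiv (Θ g) (hΘ g)) x

noncomputable def avgCLM (hΘ : IsStarAction Θ) (F : Finset G) : A →L[ℂ] A :=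
  (#F : ℂ)⁻¹ • ∑ g ∈ F, ⟨(Θ g).toLinearMap, (hΘ.isometry g).continuous⟩

lemma avgCLM_apply (hΘ : IsStarAction Θ) (F : Finset G) (x : A) :
    hΘ.avgCLM F x = avg Θ F x := by
  simp only [avgCLM, avg, smul_apply, FunLike.coe_sum, Finset.sum_apply]
  rfl

noncomputable def avgDual (hΘ : IsStarAction Θ) (F : Finset G) (φ : WeakDual ℂ A) :
    WeakDual ℂ A :=
  StrongDual.toWeakDual ((WeakDual.toStrongDual φ).comp (hΘ.avgCLM F))

lemma avgDual_apply (hΘ : IsStarAction Θ) (F : Finset G) (φ : WeakDual ℂ A) (x : A) :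
    hΘ.avgDual F φ x = φ (avg Θ F x) :=
  congrArg φ (hΘ.avgCLM_apply F x)

end IsStarAction

end Action

variable [PartialOrder A] [StarOrderedRing A]

lemma StrongDual.apply_nonneg_of_norm_le_one {φ : StrongDual ℂ A} (h1 : φ 1 = 1)
    (hφ : ‖φ‖ ≤ 1) {c : A} (hc : 0 ≤ c) : 0 ≤ φ c := by
  set d := algebraMap ℝ A ‖c‖ - c
  have hd : ‖d‖ ≤ ‖c‖ := by
    rw [CStarAlgebra.norm_le_iff_le_algebraMap d (norm_nonneg c)
      (sub_nonneg.2 (IsSelfAdjoint.of_nonneg hc).le_algebraMap_norm_self)]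
    exact sub_le_self _ hc
  have hφd : φ d = ‖c‖ - φ c := by
    simp [d, Algebra.algebraMap_eq_smul_one, h1]
  have hre : (φ d).re ≤ ‖c‖ :=
    (Complex.re_le_norm _).trans ((φ.le_opNorm d).trans (by nlinarith [norm_nonneg d]))
  rw [Complex.nonneg_iff]
  refine ⟨?_, (im_apply_eq_zero_of_isSelfAdjoint h1 hφ (.of_nonneg hc)).symm⟩
  rw [hφd] at hre
  simpa using hre

lemma StrongDual.isState_toWeakDual {φ : StrongDual ℂ A} (h1 : φ 1 = 1) (hφ : ‖φ‖ ≤ 1) :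
    IsState (StrongDual.toWeakDual φ) :=
  ⟨h1, fun a => φ.apply_nonneg_of_norm_le_one h1 hφ (star_mul_self_nonneg a)⟩

lemma CStarAlgebra.norm_one_add_of_nonneg [Nontrivial A] {b : A} (hb : 0 ≤ b) :
    ‖1 + b‖ = 1 + ‖b‖ := by
  have hspec : 1 + ‖b‖ ∈ spectrum ℝ (1 + b) := by
    simpa [add_comm] using
      (spectrum.add_mem_add_iff (s := 1)).2 (CStarAlgebra.norm_mem_spectrum_of_nonneg hb)
  refine le_antisymm ((norm_add_le _ _).trans (by rw [norm_one])) ?_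
  simpa [abs_of_nonneg (by positivity : (0 : ℝ) ≤ 1 + ‖b‖)] using
    spectrum.norm_le_norm_of_mem hspec

-- A norming functional of `1 + b` must take the value `1` at `1` and `‖b‖` at `b`.
lemma exists_isState_apply_eq_norm [Nontrivial A] {b : A} (hb : 0 ≤ b) :
    ∃ φ : WeakDual ℂ A, IsState φ ∧ φ b = ‖b‖ := by
  have hnorm := CStarAlgebra.norm_one_add_of_nonneg hb
  obtain ⟨φ, hφ, hφb⟩ := exists_dual_vector ℂ (1 + b) (by rw [hnorm]; positivity)
  have hle (x : A) : ‖φ x‖ ≤ ‖x‖ := by simpa [hφ] using φ.le_opNorm x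
  have hsum : φ 1 + φ b = ((1 + ‖b‖ : ℝ) : ℂ) := by rw [← map_add, hφb, hnorm]; rfl
  have h1 : φ 1 = (1 : ℝ) := by
    refine Complex.eq_of_norm_le_of_le_re (by simpa using hle 1) ?_
    have hre := congrArg Complex.re hsum
    simp only [Complex.add_re, Complex.ofReal_re] at hre
    linarith [(Complex.re_le_norm (φ b)).trans (hle b)]
  rw [Complex.ofReal_one] at h1
  refine ⟨StrongDual.toWeakDual φ, StrongDual.isState_toWeakDual h1 hφ.le, ?_⟩
  change φ b = _
  rw [eq_sub_of_add_eq' hsum, h1]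
  push_cast
  ring

namespace IsState

variable {φ : WeakDual ℂ A}

lemma map_nonneg (hφ : IsState φ) {c : A} (hc : 0 ≤ c) : 0 ≤ φ c := by
  obtain ⟨s, rfl⟩ := CStarAlgebra.nonneg_iff_eq_star_mul_self.1 hc
  exact hφ.2 s

noncomputable def toPositiveLinearMap (hφ : IsState φ) : A →ₚ[ℂ] ℂ :=
  .mk₀ (WeakDual.toStrongDual φ : A →ₗ[ℂ] ℂ) fun _ => hφ.map_nonneg

lemma norm_apply_le_of_nonneg (hφ : IsState φ) {c : A} (hc : 0 ≤ c) : ‖φ c‖ ≤ ‖c‖ := by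
  have := hφ.nontrivial
  have h := hφ.toPositiveLinearMap.norm_apply_le_of_nonneg c hc
  rwa [show hφ.toPositiveLinearMap 1 = 1 from hφ.1, norm_one, one_mul] at h

lemma norm_apply_le (hφ : IsState φ) (x : A) : ‖φ x‖ ≤ 4 * ‖x‖ := by
  obtain ⟨y, hy0, hyx, hx⟩ := CStarAlgebra.exists_sum_four_nonneg x
  calc ‖φ x‖ = ‖∑ i : Fin 4, Complex.I ^ (i : ℕ) * φ (y i)‖ := by
        conv_lhs => rw [hx]
        simp
    _ ≤ ∑ _i : Fin 4, ‖x‖ := by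
        refine (norm_sum_le _ _).trans (sum_le_sum fun i _ => ?_)
        simpa using (hφ.norm_apply_le_of_nonneg (hy0 i)).trans (hyx i)
    _ = 4 * ‖x‖ := by simp

end IsState

lemma isCompact_setOf_isState : IsCompact {φ : WeakDual ℂ A | IsState φ} := by
  have hclosed : IsClosed {φ : WeakDual ℂ A | IsState φ} := by
    simp only [IsState, Set.ofPred_and, Set.ofPred_forall]
    exact (isClosed_eq (WeakDual.eval_continuous 1) continuous_const).inter <|
      isClosed_iInter fun a => isClosed_le continuous_const (WeakDual.eval_continuous _)
  refine (WeakDual.isCompact_closedBall 0 4).of_isClosed_subset hclosed fun φ hφ => ?_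
  simpa using (WeakDual.toStrongDual φ).opNorm_le_bound (by norm_num) hφ.norm_apply_le

section Action

variable {G : Type*} [Group G] {Θ : G →* (A ≃ₐ[ℂ] A)}

lemma IsStarAction.apply_nonneg (hΘ : IsStarAction Θ) (g : G) {x : A} (hx : 0 ≤ x) :
    0 ≤ Θ g x := by
  obtain ⟨s, rfl⟩ := CStarAlgebra.nonneg_iff_eq_star_mul_self.1 hx
  rw [map_mul, hΘ g]
  exact star_mul_self_nonneg _

lemma IsStarAction.avg_nonneg (hΘ : IsStarAction Θ) (F : Finset G) {x : A} (hx : 0 ≤ x) :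
    0 ≤ avg Θ F x :=
  smul_nonneg (by simp) (sum_nonneg fun g _ => hΘ.apply_nonneg g hx)

lemma IsState.avgDual {φ : WeakDual ℂ A} (hφ : IsState φ) (hΘ : IsStarAction Θ)
    {F : Finset G} (hF : F.Nonempty) : IsState (hΘ.avgDual F φ) :=
  ⟨by rw [hΘ.avgDual_apply, avg_one hF, hφ.1], fun x => by
    rw [hΘ.avgDual_apply]
    exact hφ.map_nonneg (hΘ.avg_nonneg F (star_mul_self_nonneg x))⟩

lemma IsState.norm_avgDual_apply_sub_le [DecidableEq G] {φ : WeakDual ℂ A} (hφ : IsState φ)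
    (hΘ : IsStarAction Θ) (F : Finset G) (g : G) (x : A) :
    ‖hΘ.avgDual F φ (Θ g x) - hΘ.avgDual F φ x‖ ≤
      #(F.image (· * g) ∆ F) / #F * (4 * ‖x‖) := by
  set u : G → ℂ := fun h => φ (Θ h x)
  have hshift : ∑ h ∈ F, φ (Θ h (Θ g x)) = ∑ h ∈ F.image (· * g), u h := by
    rw [sum_image fun _ _ _ _ => mul_right_cancel]
    simp [u]
  have hu (h : G) : ‖u h‖ ≤ 4 * ‖x‖ := by
    simpa [u, hΘ.norm_apply] using hφ.norm_apply_le (Θ h x)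
  calc ‖hΘ.avgDual F φ (Θ g x) - hΘ.avgDual F φ x‖
      = (#F : ℝ)⁻¹ * ‖∑ h ∈ F.image (· * g), u h - ∑ h ∈ F, u h‖ := by
        simp [hΘ.avgDual_apply, avg, hshift, u, ← mul_sub]
    _ ≤ (#F : ℝ)⁻¹ * (#(F.image (· * g) ∆ F) * (4 * ‖x‖)) := by
        gcongr
        exact norm_sum_sub_sum_le_card_symmDiff_mul _ _ hu
    _ = #(F.image (· * g) ∆ F) / #F * (4 * ‖x‖) := by ring

lemma exists_invariant_state_mapClusterPt [DecidableEq G] (hΘ : IsStarAction Θ)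
    {F : ℕ → Finset G} (hF : RightFolner F) {φ : ℕ → WeakDual ℂ A} (hφ : ∀ k, IsState (φ k))
    {l : Filter ℕ} [l.NeBot] (hl : l ≤ atTop) :
    ∃ ψ : WeakDual ℂ A, IsState ψ ∧ (∀ (g : G) (x : A), ψ (Θ g x) = ψ x) ∧
      MapClusterPt ψ l fun k => hΘ.avgDual (F k) (φ k) := by
  obtain ⟨ψ, hψ, hcl⟩ := isCompact_setOf_isState.exists_mapClusterPt (f := l)
    (tendsto_principal.2 (.of_forall fun k => (hφ k).avgDual hΘ (hF.1 k)))
  refine ⟨ψ, hψ, fun g x => ?_, hcl⟩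
  have hlim : Tendsto (fun k => hΘ.avgDual (F k) (φ k) (Θ g x) - hΘ.avgDual (F k) (φ k) x)
      l (𝓝 0) := by
    refine squeeze_zero_norm (fun k => (hφ k).norm_avgDual_apply_sub_le hΘ (F k) g x) ?_
    simpa using ((hF.2 g).mul_const (4 * ‖x‖)).mono_left hl
  have hcl' := hcl.continuousAt_comp (f := fun χ : WeakDual ℂ A => χ (Θ g x) - χ x)
    ((WeakDual.eval_continuous _).sub (WeakDual.eval_continuous _)).continuousAt
  exact sub_eq_zero.1 (eq_of_nhds_neBot (hcl'.clusterPt.mono hlim))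

lemma re_apply_le_norm_avg {ψ : WeakDual ℂ A} (hψ : IsState ψ)
    (hinv : ∀ (g : G) (x : A), ψ (Θ g x) = ψ x) (hΘ : IsStarAction Θ) {F : Finset G}
    (hF : F.Nonempty) {a : A} (ha : 0 ≤ a) : (ψ a).re ≤ ‖avg Θ F a‖ := by
  rw [← apply_avg_eq_of_invariant hinv hF]
  exact (Complex.re_le_norm _).trans (hψ.norm_apply_le_of_nonneg (hΘ.avg_nonneg F ha))

lemma eventually_norm_avg_lt [Nontrivial A] [DecidableEq G] (hΘ : IsStarAction Θ)
    {F : ℕ → Finset G} (hF : RightFolner F) {a : A} (ha : 0 ≤ a) {b : ℝ}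
    (hb : ∀ ψ : WeakDual ℂ A, IsState ψ → (∀ (g : G) (x : A), ψ (Θ g x) = ψ x) → (ψ a).re < b) :
    ∀ᶠ k in atTop, ‖avg Θ (F k) a‖ < b := by
  choose φ hφ hφa using fun k => exists_isState_apply_eq_norm (hΘ.avg_nonneg (F k) ha)
  by_contra h
  simp only [not_eventually, not_lt] at h
  have := frequently_iff_neBot.1 h
  obtain ⟨ψ, hψ, hinv, hcl⟩ := exists_invariant_state_mapClusterPt hΘ hF hφ
    (l := atTop ⊓ 𝓟 {k | b ≤ ‖avg Θ (F k) a‖}) inf_le_left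
  have hclosed : IsClosed {χ : WeakDual ℂ A | b ≤ (χ a).re} :=
    isClosed_le continuous_const (Complex.continuous_re.comp (WeakDual.eval_continuous a))
  have hbψ : b ≤ (ψ a).re := hclosed.mem_of_mapClusterPt hcl <|
    mem_inf_of_right fun k (hk : b ≤ ‖avg Θ (F k) a‖) => by
      simpa [hΘ.avgDual_apply, hφa] using hk
  exact (hb ψ hψ hinv).not_ge hbψ

end Action

end CStarAlgebra


theorem stmt15_general {A G : Type*} [NormedRing A] [StarRing A] [CStarRing A] [NormedAlgebra ℂ A]
    [CompleteSpace A] [StarModule ℂ A]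
    [PartialOrder A] [StarOrderedRing A] [Group G] [DecidableEq G]
    (Θ : G →* (A ≃ₐ[ℂ] A)) (hΘ : IsStarAction Θ)
    (F : ℕ → Finset G) (hF : RightFolner F)
    (a : A) (ha : 0 ≤ a) :
    Filter.Tendsto (fun k => ‖avg Θ (F k) a‖) Filter.atTop
      (nhds (sSup {r : ℝ | ∃ ψ : WeakDual ℂ A, IsState ψ ∧
        (∀ (g : G) (x : A), ψ (Θ g x) = ψ x) ∧ r = (ψ a).re})) := by
  let _ : CStarAlgebra A := { }
  rcases subsingleton_or_nontrivial A with hA | hA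
  · have hempty : {r : ℝ | ∃ ψ : WeakDual ℂ A, IsState ψ ∧
        (∀ (g : G) (x : A), ψ (Θ g x) = ψ x) ∧ r = (ψ a).re} = ∅ :=
      Set.eq_empty_of_forall_notMem fun _ ⟨ψ, hψ, _⟩ =>
        have := hψ.nontrivial
        false_of_nontrivial_of_subsingleton A
    rw [hempty, Real.sSup_empty]
    simp only [Subsingleton.elim _ (0 : A), norm_zero, tendsto_const_nhds]
  obtain ⟨φ, hφ, -⟩ := exists_isState_apply_eq_norm (le_refl (0 : A))
  obtain ⟨ψ₀, hψ₀, hinv₀, -⟩ :=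
    exists_invariant_state_mapClusterPt hΘ hF (fun _ => hφ) (l := atTop) le_rfl
  have hbdd : BddAbove {r : ℝ | ∃ ψ : WeakDual ℂ A, IsState ψ ∧
      (∀ (g : G) (x : A), ψ (Θ g x) = ψ x) ∧ r = (ψ a).re} := by
    refine ⟨‖a‖, ?_⟩
    rintro _ ⟨ψ, hψ, -, rfl⟩
    exact (Complex.re_le_norm _).trans (hψ.norm_apply_le_of_nonneg ha)
  refine tendsto_order.2 ⟨fun b hb => .of_forall fun k => hb.trans_le ?_,
    fun b hb => eventually_norm_avg_lt hΘ hF ha fun ψ hψ hinv =>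
      (le_csSup hbdd ⟨ψ, hψ, hinv, rfl⟩).trans_lt hb⟩
  refine csSup_le ⟨_, ψ₀, hψ₀, hinv₀, rfl⟩ ?_
  rintro _ ⟨ψ, hψ, hinv, rfl⟩
  exact re_apply_le_norm_avg hψ hinv hΘ (hF.1 k) ha

/-- For any right Følner sequence `(F_k)` and positive `a`, the norms of the ergodic
averages `‖Avg_{F_k} a‖` converge to `m(a | S^G)`; in particular the limit does not
depend on the Følner sequence. -/
theorem stmt15 {A G : Type*} [NormedRing A] [StarRing A] [CStarRing A] [NormedAlgebra ℂ A]
    [CompleteSpace A] [StarModule ℂ A] [TopologicalSpace.SeparableSpace A]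
    [PartialOrder A] [StarOrderedRing A] [Group G] [Countable G] [DecidableEq G]
    (Θ : G →* (A ≃ₐ[ℂ] A)) (hΘ : IsStarAction Θ)
    (F : ℕ → Finset G) (hF : RightFolner F)
    (a : A) (ha : 0 ≤ a) :
    Filter.Tendsto (fun k => ‖avg Θ (F k) a‖) Filter.atTop
      (nhds (sSup {r : ℝ | ∃ ψ : WeakDual ℂ A, IsState ψ ∧
        (∀ (g : G) (x : A), ψ (Θ g x) = ψ x) ∧ r = (ψ a).re})) :=
  stmt15_general Θ hΘ F hF a ha
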